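/- arXiv:2006.03712 — 2 statements merged into one kernel-verified Lean document; each statement's English description precedes it below -/
import Mathlib

section
/- Let X ⊆ ℝ^d be compact, Y ⊆ ℝ^m be nonempty, compact and convex, and let σ be a probability measure on X × Y whose marginal μ on X has full support. Let ℓ : ℝ^m × ℝ^m → ℝ be continuous, Lipschitz in its first argument uniformly in the second, and with z ↦ ℓ(z,y) strictly convex for every y. Then for every α ≥ 0 there exists a unique map f* : X → Y that is Lipschitz with constant α and satisfies L_σ(f*) ≤ L_σ(f) for every map f : X → Y that is Lipschitz with constant α, where L_σ(f) = ∫ ℓ(f(x), y) dσ(x,y). -/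
/-!
Restricted to the compact set `X`, the admissible maps form a uniformly bounded equicontinuous
family, hence a compact set of bounded continuous functions by Arzelà–Ascoli, on which the loss
is continuous by dominated convergence; so a minimizer exists. The admissible maps form a convex
set, so the midpoint of two minimizers `f`, `g` is admissible, and strict convexity of `ℓ` then
forces `f x = g x` for `σ`-almost every `(x, y)`. The set of `x ∈ X` where the continuous maps `f`
and `g` differ is relatively open in `X`, so full support of the marginal makes it empty.
-/

open MeasureTheory Set
open scoped NNReal BoundedContinuousFunction

def lipschitzMapsTo {E F : Type*} [PseudoEMetricSpace E] [PseudoEMetricSpace F]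
    (X : Set E) (Y : Set F) (K : ℝ≥0) : Set (E → F) :=
  {f | MapsTo f X Y ∧ LipschitzOnWith K f X}

theorem mem_lipschitzMapsTo_toNNReal_iff {E F : Type*} [SeminormedAddCommGroup E]
    [SeminormedAddCommGroup F] {X : Set E} {Y : Set F} {α : ℝ} (hα : 0 ≤ α) {f : E → F} :
    f ∈ lipschitzMapsTo X Y α.toNNReal ↔
      MapsTo f X Y ∧ ∀ x₁ ∈ X, ∀ x₂ ∈ X, ‖f x₁ - f x₂‖ ≤ α * ‖x₁ - x₂‖ := by
  rw [lipschitzMapsTo, mem_ofPred_eq, lipschitzOnWith_iff_norm_sub_le, Real.coe_toNNReal α hα]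

theorem convex_lipschitzMapsTo {E F : Type*} [PseudoEMetricSpace E] [SeminormedAddCommGroup F]
    [NormedSpace ℝ F] {X : Set E} {Y : Set F} (hY : Convex ℝ Y) (K : ℝ≥0) :
    Convex ℝ (lipschitzMapsTo X Y K) := by
  rintro f ⟨hfY, hf⟩ g ⟨hgY, hg⟩ a b ha hb hab
  refine ⟨fun x hx => hY (hfY hx) (hgY hx) ha hb hab, ?_⟩
  have hK : ‖a‖₊ * K + ‖b‖₊ * K = K := by
    ext
    simp [Real.norm_of_nonneg ha, Real.norm_of_nonneg hb, ← add_mul, hab]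
  exact hK ▸ ((lipschitzWith_smul a).comp_lipschitzOnWith hf).add
    ((lipschitzWith_smul b).comp_lipschitzOnWith hg)

theorem BoundedContinuousFunction.isCompact_setOf_mapsTo_lipschitzWith {α β : Type*}
    [PseudoMetricSpace α] [CompactSpace α] [MetricSpace β] {Y : Set β} (hY : IsCompact Y)
    (K : ℝ≥0) : IsCompact {f : α →ᵇ β | (∀ x, f x ∈ Y) ∧ LipschitzWith K f} := by
  refine arzela_ascoli₂ Y hY _ ?_ (fun f x hf => hf.1 x) ?_
  · have hmaps : IsClosed {f : α →ᵇ β | ∀ x, f x ∈ Y} := by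
      simp only [ofPred_forall]
      exact isClosed_iInter fun x => hY.isClosed.preimage (continuous_eval_const x)
    have hlip : IsClosed {f : α →ᵇ β | LipschitzWith K f} :=
      (isClosed_setOfPred_lipschitzWith K).preimage (continuous_coe (α := α) (β := β))
    exact hmaps.inter hlip
  · exact (LipschitzWith.uniformEquicontinuous _ K fun f => f.2.2).equicontinuous

theorem extend_val_mem_lipschitzMapsTo {E F : Type*} [PseudoEMetricSpace E]
    [PseudoEMetricSpace F] {X : Set E} {Y : Set F} {K : ℝ≥0} {g : X → F}
    (hgY : ∀ x, g x ∈ Y) (hg : LipschitzWith K g) (e : E → F) :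
    Function.extend (↑) g e ∈ lipschitzMapsTo X Y K := by
  have hrestrict : X.domRestrict (Function.extend (↑) g e) = g :=
    Function.extend_comp Subtype.val_injective g e
  exact ⟨fun x hx => (congrArg (· ∈ Y) (congrFun hrestrict ⟨x, hx⟩)).mpr (hgY ⟨x, hx⟩),
    lipschitzOnWith_iff_restrict.2 (hrestrict.symm ▸ hg)⟩

noncomputable def lossFun {E F : Type*} [MeasurableSpace E] [MeasurableSpace F]
    (σ : Measure (E × F)) (ℓ : F × F → ℝ) (f : E → F) : ℝ :=
  ∫ p, ℓ (f p.1, p.2) ∂σ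

section Loss

variable {E F : Type*} [MeasurableSpace E] [MeasurableSpace F] {σ : Measure (E × F)}
  {X : Set E} {Y : Set F} {ℓ : F × F → ℝ}

theorem lossFun_congr (hσ : ∀ᵐ p ∂σ, p.1 ∈ X) {f g : E → F} (hfg : EqOn f g X) :
    lossFun σ ℓ f = lossFun σ ℓ g :=
  integral_congr_ae (hσ.mono fun p hp => by simp only [hfg hp])

theorem exists_forall_ae_norm_loss_le [TopologicalSpace F] (hY : IsCompact Y)
    (hσ : ∀ᵐ p ∂σ, p ∈ X ×ˢ Y) (hℓ : Continuous ℓ) :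
    ∃ M, ∀ f : E → F, MapsTo f X Y → ∀ᵐ p ∂σ, ‖ℓ (f p.1, p.2)‖ ≤ M := by
  obtain ⟨M, hM⟩ := (hY.prod hY).exists_bound_of_continuousOn hℓ.continuousOn
  exact ⟨M, fun f hf => hσ.mono fun p hp => hM _ ⟨hf hp.1, hp.2⟩⟩

variable [TopologicalSpace E] [TopologicalSpace F] [T2Space F] [OpensMeasurableSpace (E × F)]
  [IsFiniteMeasure σ]

theorem integrable_loss (hX : IsClosed X) (hY : IsCompact Y) (hσ : ∀ᵐ p ∂σ, p ∈ X ×ˢ Y)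
    (hℓ : Continuous ℓ) {f : E → F} (hf : ContinuousOn f X) (hfY : MapsTo f X Y) :
    Integrable (fun p => ℓ (f p.1, p.2)) σ := by
  obtain ⟨M, hM⟩ := exists_forall_ae_norm_loss_le hY hσ hℓ
  have hcont : ContinuousOn (fun p : E × F => ℓ (f p.1, p.2)) (X ×ˢ Y) :=
    hℓ.comp_continuousOn ((hf.comp continuousOn_fst fun p hp => hp.1).prodMk continuousOn_snd)
  have hmeas : AEStronglyMeasurable (fun p : E × F => ℓ (f p.1, p.2)) σ := by
    rw [← Measure.restrict_eq_self_of_ae_mem hσ]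
    exact hcont.aestronglyMeasurable (hX.prod hY.isClosed).measurableSet
  exact .of_bound hmeas M (hM f hfY)

theorem continuousOn_lossFun {T : Type*} [TopologicalSpace T] [FirstCountableTopology T]
    (hX : IsClosed X) (hY : IsCompact Y) (hσ : ∀ᵐ p ∂σ, p ∈ X ×ˢ Y) (hℓ : Continuous ℓ)
    {f : T → E → F} {s : Set T} (hf : ∀ t ∈ s, ContinuousOn (f t) X)
    (hfY : ∀ t ∈ s, MapsTo (f t) X Y) (hfX : ∀ x ∈ X, Continuous fun t => f t x) :
    ContinuousOn (fun t => lossFun σ ℓ (f t)) s := by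
  obtain ⟨M, hM⟩ := exists_forall_ae_norm_loss_le hY hσ hℓ
  refine continuousOn_of_dominated (bound := fun _ => M)
    (fun t ht => (integrable_loss hX hY hσ hℓ (hf t ht) (hfY t ht)).1)
    (fun t ht => hM (f t) (hfY t ht)) (integrable_const M) (hσ.mono fun p hp => ?_)
  exact (hℓ.comp ((hfX p.1 hp.1).prodMk continuous_const)).continuousOn

end Loss

theorem exists_isMinOn_lossFun {E F : Type*} [MetricSpace E] [MeasurableSpace E]
    [MetricSpace F] [MeasurableSpace F] [OpensMeasurableSpace (E × F)]
    {σ : Measure (E × F)} [IsFiniteMeasure σ] {X : Set E} {Y : Set F} {ℓ : F × F → ℝ}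
    (hX : IsCompact X) (hY : IsCompact Y) (hYne : Y.Nonempty) (hσ : ∀ᵐ p ∂σ, p ∈ X ×ˢ Y)
    (hℓ : Continuous ℓ) (K : ℝ≥0) :
    ∃ f ∈ lipschitzMapsTo X Y K, IsMinOn (lossFun σ ℓ) (lipschitzMapsTo X Y K) f := by
  obtain ⟨y₀, hy₀⟩ := hYne
  have : CompactSpace X := isCompact_iff_compactSpace.mp hX
  set A := {g : X →ᵇ F | (∀ x, g x ∈ Y) ∧ LipschitzWith K g}
  let extend (g : X →ᵇ F) : E → F := Function.extend (↑) g fun _ => y₀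
  have hextend : ∀ g ∈ A, extend g ∈ lipschitzMapsTo X Y K := fun g hg =>
    extend_val_mem_lipschitzMapsTo hg.1 hg.2 _
  have hextend_apply : ∀ (g : X →ᵇ F) (x : X), extend g x = g x := fun g =>
    Subtype.val_injective.extend_apply g _
  have hΦ : ContinuousOn (fun g => lossFun σ ℓ (extend g)) A := by
    refine continuousOn_lossFun hX.isClosed hY hσ hℓ (fun g hg => (hextend g hg).2.continuousOn)
      (fun g hg => (hextend g hg).1) fun x hx => ?_
    simpa only [hextend_apply _ ⟨x, hx⟩] using continuous_eval_const (⟨x, hx⟩ : X)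
  have hAne : A.Nonempty :=
    ⟨.const X y₀, fun _ => hy₀, LipschitzWith.const' y₀⟩
  obtain ⟨g₀, hg₀, hmin⟩ :=
    (BoundedContinuousFunction.isCompact_setOf_mapsTo_lipschitzWith hY K).exists_isMinOn hAne hΦ
  refine ⟨extend g₀, hextend g₀ hg₀, fun f ⟨hfY, hf⟩ => ?_⟩
  let g : X →ᵇ F := .mkOfCompact ⟨X.domRestrict f, hf.to_restrict.continuous⟩
  have hgf : EqOn (extend g) f X := fun x hx => hextend_apply g ⟨x, hx⟩
  calc lossFun σ ℓ (extend g₀) ≤ lossFun σ ℓ (extend g) :=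
        hmin (show g ∈ A from ⟨fun x => hfY x.2, hf.to_restrict⟩)
    _ = lossFun σ ℓ f := lossFun_congr (hσ.mono fun p hp => hp.1) hgf

theorem ae_eq_of_integral_le_integral_strictConvexOn {Ω F : Type*} [MeasurableSpace Ω]
    {μ : Measure Ω} [AddCommGroup F] [Module ℝ F] {φ : Ω → F → ℝ}
    (hφ : ∀ ω, StrictConvexOn ℝ univ (φ ω)) {u v : Ω → F} {a b : ℝ} (ha : 0 < a) (hb : 0 < b)
    (hab : a + b = 1) (hu : Integrable (fun ω => φ ω (u ω)) μ)
    (hv : Integrable (fun ω => φ ω (v ω)) μ)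
    (hw : Integrable (fun ω => φ ω (a • u ω + b • v ω)) μ)
    (hu_le : ∫ ω, φ ω (u ω) ∂μ ≤ ∫ ω, φ ω (a • u ω + b • v ω) ∂μ)
    (hv_le : ∫ ω, φ ω (v ω) ∂μ ≤ ∫ ω, φ ω (a • u ω + b • v ω) ∂μ) :
    u =ᵐ[μ] v := by
  set gap : Ω → ℝ := fun ω => a * φ ω (u ω) + b * φ ω (v ω) - φ ω (a • u ω + b • v ω)
  have hgap_nonneg : 0 ≤ gap := fun ω =>
    sub_nonneg.2 ((hφ ω).convexOn.2 trivial trivial ha.le hb.le hab)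
  have huv : Integrable (fun ω => a * φ ω (u ω) + b * φ ω (v ω)) μ :=
    (hu.const_mul a).add (hv.const_mul b)
  have hgap_zero : ∫ ω, gap ω ∂μ = 0 := by
    refine le_antisymm ?_ (integral_nonneg hgap_nonneg)
    rw [integral_sub huv hw, integral_add (hu.const_mul a) (hv.const_mul b), integral_const_mul,
      integral_const_mul]
    linear_combination a * hu_le + b * hv_le + (∫ ω, φ ω (a • u ω + b • v ω) ∂μ) * hab
  filter_upwards [(integral_eq_zero_iff_of_nonneg hgap_nonneg (huv.sub hw)).1 hgap_zero]
    with ω hω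
  by_contra hne
  have hlt := (hφ ω).2 trivial trivial hne ha hb hab
  simp only [gap, Pi.zero_apply, smul_eq_mul] at hω hlt
  linarith

theorem eqOn_of_ae_eq_comp_of_map_pos {Ω E F : Type*} [MeasurableSpace Ω] [TopologicalSpace E]
    [MeasurableSpace E] [OpensMeasurableSpace E] [TopologicalSpace F] [T2Space F]
    {μ : Measure Ω} {π : Ω → E} (hπ : Measurable π) {X : Set E} (hX : MeasurableSet X)
    (hμ : ∀ U, IsOpen U → (U ∩ X).Nonempty → 0 < μ.map π (U ∩ X)) {f g : E → F}
    (hf : ContinuousOn f X) (hg : ContinuousOn g X)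
    (hfg : ∀ᵐ ω ∂μ, π ω ∈ X → f (π ω) = g (π ω)) : EqOn f g X := by
  intro x hx
  by_contra hne
  obtain ⟨U, hU, hUX⟩ :=
    continuousOn_iff'.1 (hf.prodMk hg) (diagonal F)ᶜ isClosed_diagonal.isOpen_compl
  have hxU : x ∈ U ∩ X := hUX ▸ ⟨hne, hx⟩
  refine (hμ U hU ⟨x, hxU⟩).ne' ?_
  rw [Measure.map_apply hπ (hU.measurableSet.inter hX)]
  refine measure_eq_zero_iff_ae_notMem.2 (hfg.mono fun ω h hωU => ?_)
  have hω : π ω ∈ (fun x => (f x, g x)) ⁻¹' (diagonal F)ᶜ ∩ X := hUX ▸ hωU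
  exact hω.1 (h hω.2)

theorem eqOn_of_isMinOn_lossFun {E F : Type*} [PseudoEMetricSpace E] [MeasurableSpace E]
    [OpensMeasurableSpace E] [NormedAddCommGroup F] [NormedSpace ℝ F] [MeasurableSpace F]
    [OpensMeasurableSpace (E × F)] {σ : Measure (E × F)} [IsFiniteMeasure σ] {X : Set E}
    {Y : Set F} {ℓ : F × F → ℝ} {K : ℝ≥0} (hX : IsClosed X) (hY : IsCompact Y)
    (hYconv : Convex ℝ Y) (hσ : ∀ᵐ p ∂σ, p ∈ X ×ˢ Y)
    (hσX : ∀ U, IsOpen U → (U ∩ X).Nonempty → 0 < σ.map Prod.fst (U ∩ X))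
    (hℓ : Continuous ℓ) (hℓconv : ∀ y, StrictConvexOn ℝ univ fun z => ℓ (z, y)) {f g : E → F}
    (hf : f ∈ lipschitzMapsTo X Y K) (hg : g ∈ lipschitzMapsTo X Y K)
    (hfmin : IsMinOn (lossFun σ ℓ) (lipschitzMapsTo X Y K) f)
    (hgmin : IsMinOn (lossFun σ ℓ) (lipschitzMapsTo X Y K) g) : EqOn f g X := by
  have hw : (2⁻¹ : ℝ) • f + (2⁻¹ : ℝ) • g ∈ lipschitzMapsTo X Y K :=
    convex_lipschitzMapsTo hYconv K hf hg (by norm_num) (by norm_num) (by norm_num)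
  have hint : ∀ h ∈ lipschitzMapsTo X Y K, Integrable (fun p => ℓ (h p.1, p.2)) σ :=
    fun h hh => integrable_loss hX hY hσ hℓ hh.2.continuousOn hh.1
  have hae : ∀ᵐ p ∂σ, f p.1 = g p.1 :=
    ae_eq_of_integral_le_integral_strictConvexOn (φ := fun (p : E × F) z => ℓ (z, p.2))
      (u := fun p => f p.1) (v := fun p => g p.1) (a := 2⁻¹) (b := 2⁻¹) (fun p => hℓconv p.2)
      (by norm_num) (by norm_num) (by norm_num) (hint f hf) (hint g hg) (hint _ hw) (hfmin hw)
      (hgmin hw)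
  exact eqOn_of_ae_eq_comp_of_map_pos measurable_fst hX.measurableSet hσX hf.2.continuousOn
    hg.2.continuousOn (hae.mono fun p hp _ => hp)

theorem lipschitz_constrained_loss_min_unique_minimizer_general {d m : ℕ}
    (X : Set (EuclideanSpace ℝ (Fin d))) (Y : Set (EuclideanSpace ℝ (Fin m)))
    (hX : IsCompact X) (hYne : Y.Nonempty) (hY : IsCompact Y) (hYconv : Convex ℝ Y)
    (σ : Measure (EuclideanSpace ℝ (Fin d) × EuclideanSpace ℝ (Fin m)))
    [IsProbabilityMeasure σ]
    (hσXY : σ (X ×ˢ Y)ᶜ = 0)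
    (hfullsupp : ∀ U : Set (EuclideanSpace ℝ (Fin d)),
      IsOpen U → (U ∩ X).Nonempty → 0 < σ.map Prod.fst (U ∩ X))
    (ℓ : EuclideanSpace ℝ (Fin m) × EuclideanSpace ℝ (Fin m) → ℝ)
    (hℓcont : Continuous ℓ)
    (hℓconv : ∀ y, StrictConvexOn ℝ Set.univ (fun z => ℓ (z, y)))
    (α : ℝ) (hα : 0 ≤ α) :
    ∃ fstar : EuclideanSpace ℝ (Fin d) → EuclideanSpace ℝ (Fin m),
      ((∀ x ∈ X, fstar x ∈ Y) ∧
        ∀ x₁ ∈ X, ∀ x₂ ∈ X, ‖fstar x₁ - fstar x₂‖ ≤ α * ‖x₁ - x₂‖) ∧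
      (∀ f : EuclideanSpace ℝ (Fin d) → EuclideanSpace ℝ (Fin m),
        (∀ x ∈ X, f x ∈ Y) →
        (∀ x₁ ∈ X, ∀ x₂ ∈ X, ‖f x₁ - f x₂‖ ≤ α * ‖x₁ - x₂‖) →
        (∫ p, ℓ (fstar p.1, p.2) ∂σ) ≤ ∫ p, ℓ (f p.1, p.2) ∂σ) ∧
      (∀ g : EuclideanSpace ℝ (Fin d) → EuclideanSpace ℝ (Fin m),
        (∀ x ∈ X, g x ∈ Y) →
        (∀ x₁ ∈ X, ∀ x₂ ∈ X, ‖g x₁ - g x₂‖ ≤ α * ‖x₁ - x₂‖) →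
        (∀ f : EuclideanSpace ℝ (Fin d) → EuclideanSpace ℝ (Fin m),
          (∀ x ∈ X, f x ∈ Y) →
          (∀ x₁ ∈ X, ∀ x₂ ∈ X, ‖f x₁ - f x₂‖ ≤ α * ‖x₁ - x₂‖) →
          (∫ p, ℓ (g p.1, p.2) ∂σ) ≤ ∫ p, ℓ (f p.1, p.2) ∂σ) →
        ∀ x ∈ X, g x = fstar x) := by
  have hσ : ∀ᵐ p ∂σ, p ∈ X ×ˢ Y := ae_iff.2 hσXY
  have hmem (f : EuclideanSpace ℝ (Fin d) → EuclideanSpace ℝ (Fin m)) :=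
    mem_lipschitzMapsTo_toNNReal_iff (X := X) (Y := Y) hα (f := f)
  obtain ⟨fstar, hfstar, hmin⟩ := exists_isMinOn_lossFun hX hY hYne hσ hℓcont α.toNNReal
  refine ⟨fstar, (hmem fstar).1 hfstar, fun f hfY hf => hmin ((hmem f).2 ⟨hfY, hf⟩),
    fun g hgY hg hgmin => ?_⟩
  have hg : g ∈ lipschitzMapsTo X Y α.toNNReal := (hmem g).2 ⟨hgY, hg⟩
  exact eqOn_of_isMinOn_lossFun hX.isClosed hY hYconv hσ hfullsupp hℓcont hℓconv hg hfstar
    (fun f hf => hgmin f ((hmem f).1 hf).1 ((hmem f).1 hf).2) hmin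

/-- (Existence and uniqueness in Theorem 1 of the paper.) For compact
`X`, nonempty compact convex `Y`, a probability measure `σ` on `X ×ˢ Y` whose marginal
on `X` has full support, and a continuous loss `ℓ` that is Lipschitz and strictly convex
in its first argument, the Lipschitz-constrained loss minimization problem has a unique
minimizer `f* : X → Y` among maps `X → Y` that are Lipschitz with constant `α`
(uniqueness is as a map on `X`). -/
theorem lipschitz_constrained_loss_min_unique_minimizer {d m : ℕ}
    (X : Set (EuclideanSpace ℝ (Fin d))) (Y : Set (EuclideanSpace ℝ (Fin m)))
    (hX : IsCompact X) (hYne : Y.Nonempty) (hY : IsCompact Y) (hYconv : Convex ℝ Y)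
    (σ : Measure (EuclideanSpace ℝ (Fin d) × EuclideanSpace ℝ (Fin m)))
    [IsProbabilityMeasure σ]
    (hσXY : σ (X ×ˢ Y)ᶜ = 0)
    (hfullsupp : ∀ U : Set (EuclideanSpace ℝ (Fin d)),
      IsOpen U → (U ∩ X).Nonempty → 0 < σ.map Prod.fst (U ∩ X))
    (ℓ : EuclideanSpace ℝ (Fin m) × EuclideanSpace ℝ (Fin m) → ℝ)
    (hℓcont : Continuous ℓ)
    (C : ℝ) (hℓlip : ∀ y z₁ z₂, |ℓ (z₁, y) - ℓ (z₂, y)| ≤ C * ‖z₁ - z₂‖)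
    (hℓconv : ∀ y, StrictConvexOn ℝ Set.univ (fun z => ℓ (z, y)))
    (α : ℝ) (hα : 0 ≤ α) :
    ∃ fstar : EuclideanSpace ℝ (Fin d) → EuclideanSpace ℝ (Fin m),
      ((∀ x ∈ X, fstar x ∈ Y) ∧
        ∀ x₁ ∈ X, ∀ x₂ ∈ X, ‖fstar x₁ - fstar x₂‖ ≤ α * ‖x₁ - x₂‖) ∧
      (∀ f : EuclideanSpace ℝ (Fin d) → EuclideanSpace ℝ (Fin m),
        (∀ x ∈ X, f x ∈ Y) →
        (∀ x₁ ∈ X, ∀ x₂ ∈ X, ‖f x₁ - f x₂‖ ≤ α * ‖x₁ - x₂‖) →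
        (∫ p, ℓ (fstar p.1, p.2) ∂σ) ≤ ∫ p, ℓ (f p.1, p.2) ∂σ) ∧
      (∀ g : EuclideanSpace ℝ (Fin d) → EuclideanSpace ℝ (Fin m),
        (∀ x ∈ X, g x ∈ Y) →
        (∀ x₁ ∈ X, ∀ x₂ ∈ X, ‖g x₁ - g x₂‖ ≤ α * ‖x₁ - x₂‖) →
        (∀ f : EuclideanSpace ℝ (Fin d) → EuclideanSpace ℝ (Fin m),
          (∀ x ∈ X, f x ∈ Y) →
          (∀ x₁ ∈ X, ∀ x₂ ∈ X, ‖f x₁ - f x₂‖ ≤ α * ‖x₁ - x₂‖) →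
          (∫ p, ℓ (g p.1, p.2) ∂σ) ≤ ∫ p, ℓ (f p.1, p.2) ∂σ) →
        ∀ x ∈ X, g x = fstar x) :=
  lipschitz_constrained_loss_min_unique_minimizer_general X Y hX hYne hY hYconv σ hσXY hfullsupp ℓ
    hℓcont hℓconv α hα
end

section
/- Let X ⊆ ℝ^d be compact, Y ⊆ ℝ^m be nonempty, compact and convex, σ a probability measure on X × Y, and ℓ : ℝ^m × ℝ^m → ℝ continuous and Lipschitz in its first argument uniformly in the second. Let c ∈ ℝ and suppose the feasible set S = {f : X → Y : f is Lipschitz and L_σ(f) ≤ c} is nonempty, where L_σ(f) = ∫ ℓ(f(x), y) dσ(x,y). Then the infimum over S of the Lipschitz constant is attained: there exists f° ∈ S and K₀ ≥ 0 such that f° is Lipschitz with constant K₀, L_σ(f°) ≤ c, and K₀ ≤ K for every g ∈ S and every K such that g is Lipschitz with constant K. -/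
/-!
Restricting to `X`, feasible maps are bounded continuous functions `X → Y`. The feasible set is
closed in the uniform topology: the constraint `f x ∈ Y` is closed, and the loss is continuous
along uniformly convergent sequences by dominated convergence (`σ` lives on `X ×ˢ Y`, and `ℓ`
is bounded on the compact set `Y ×ˢ Y`). By Arzelà–Ascoli its intersection with the `K`-Lipschitz maps
is compact, so for `K` decreasing to the infimum `K₀` these sets form a directed family of
nonempty compacta; any point of their intersection is `K₀`-Lipschitz and feasible.
-/

open MeasureTheory Topology Filter BoundedContinuousFunction
open scoped NNReal

theorem LipschitzWith.of_forall_lt {α β : Type*} [PseudoMetricSpace α] [PseudoMetricSpace β]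
    {K₀ : ℝ≥0} {f : α → β} (h : ∀ K, K₀ < K → LipschitzWith K f) : LipschitzWith K₀ f := by
  refine LipschitzWith.of_dist_le_mul fun x y => ?_
  have hlim : Tendsto (fun K : ℝ≥0 => (K : ℝ) * dist x y) (𝓝[>] K₀) (𝓝 (K₀ * dist x y)) :=
    ((NNReal.continuous_coe.mul continuous_const).tendsto K₀).mono_left nhdsWithin_le_nhds
  exact ge_of_tendsto hlim (eventually_nhdsWithin_of_forall fun K hK => (h K hK).dist_le_mul x y)

section LeastLipschitzConstant

variable {α β : Type*} [PseudoMetricSpace α] [PseudoMetricSpace β]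

theorem BoundedContinuousFunction.isClosed_setOf_lipschitzWith (K : ℝ≥0) :
    IsClosed {f : α →ᵇ β | LipschitzWith K f} :=
  (isClosed_setOfPred_lipschitzWith K).preimage (continuous_coe (α := α) (β := β))

variable [CompactSpace α] {S : Set (α →ᵇ β)} {Y : Set β}

theorem IsClosed.isCompact_inter_setOf_lipschitzWith (hS : IsClosed S) (hY : IsCompact Y)
    (hSY : ∀ f ∈ S, ∀ x, f x ∈ Y) (K : ℝ≥0) : IsCompact (S ∩ {f | LipschitzWith K f}) :=
  arzela_ascoli₂ Y hY _ (hS.inter (isClosed_setOf_lipschitzWith K))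
    (fun f x hf => hSY f hf.1 x)
    (LipschitzWith.uniformEquicontinuous _ K fun f => f.2.2).equicontinuous

theorem IsClosed.exists_lipschitzWith_forall_le (hS : IsClosed S) (hY : IsCompact Y)
    (hSY : ∀ f ∈ S, ∀ x, f x ∈ Y) (hne : ∃ f ∈ S, ∃ K, LipschitzWith K f) :
    ∃ f ∈ S, ∃ K₀, LipschitzWith K₀ f ∧ ∀ g ∈ S, ∀ K, LipschitzWith K g → K₀ ≤ K := by
  set A : Set ℝ≥0 := {K | ∃ f ∈ S, LipschitzWith K f}
  have hA : A.Nonempty := let ⟨f, hf, K, hK⟩ := hne; ⟨K, f, hf, hK⟩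
  set K₀ := sInf A
  let T : {K // K₀ < K} → Set (α →ᵇ β) := fun K => S ∩ {f | LipschitzWith K f}
  have : Nonempty {K // K₀ < K} := ⟨⟨K₀ + 1, lt_add_one K₀⟩⟩
  have hT_directed : Directed (· ⊇ ·) T :=
    Monotone.directed_ge fun K K' hKK' f hf => ⟨hf.1, hf.2.weaken hKK'⟩
  have hT_ne (K : {K // K₀ < K}) : (T K).Nonempty :=
    let ⟨_, ⟨f, hf, hK'⟩, hlt⟩ := exists_lt_of_csInf_lt hA K.2
    ⟨f, hf, hK'.weaken hlt.le⟩
  obtain ⟨f, hf⟩ := IsCompact.nonempty_iInter_of_directed_nonempty_isCompact_isClosed T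
    hT_directed hT_ne (fun K => hS.isCompact_inter_setOf_lipschitzWith hY hSY K)
    (fun K => hS.inter (isClosed_setOf_lipschitzWith K))
  rw [Set.mem_iInter] at hf
  exact ⟨f, (hf (Classical.arbitrary _)).1, K₀, .of_forall_lt fun K hK => (hf ⟨K, hK⟩).2,
    fun g hg K hK => csInf_le (OrderBot.bddBelow A) ⟨g, hg, hK⟩⟩

end LeastLipschitzConstant

section ExpectedLoss

variable {α E : Type*} [MeasurableSpace α] [MeasurableSpace E] {σ : Measure (α × E)}
  {ℓ : E × E → ℝ} {X : Set α} {Y : Set E}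

/-- The loss `L_σ(f)`. -/
noncomputable def expectedLoss (σ : Measure (α × E)) (ℓ : E × E → ℝ) (f : α → E) : ℝ :=
  ∫ p, ℓ (f p.1, p.2) ∂σ

theorem expectedLoss_congr (hσ : ∀ᵐ p ∂σ, p.1 ∈ X) {f g : α → E} (hfg : Set.EqOn f g X) :
    expectedLoss σ ℓ f = expectedLoss σ ℓ g :=
  integral_congr_ae (hσ.mono fun p hp => by simp only [hfg hp])

variable [NormedAddCommGroup E] [BorelSpace E] [SecondCountableTopology E]

theorem tendsto_expectedLoss [IsFiniteMeasure σ] (hℓ : Continuous ℓ) (hY : IsCompact Y)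
    (hσ : ∀ᵐ p ∂σ, p ∈ X ×ˢ Y) {u : ℕ → α → E} {f : α → E} (hu : ∀ n, Measurable (u n))
    (huY : ∀ n, ∀ x ∈ X, u n x ∈ Y)
    (hlim : ∀ x ∈ X, Tendsto (fun n => u n x) atTop (𝓝 (f x))) :
    Tendsto (fun n => expectedLoss σ ℓ (u n)) atTop (𝓝 (expectedLoss σ ℓ f)) := by
  obtain ⟨M, hM⟩ := (hY.prod hY).exists_bound_of_continuousOn hℓ.continuousOn
  refine tendsto_integral_of_dominated_convergence (fun _ => M) (fun n => ?_)
    (integrable_const M) (fun n => hσ.mono fun p hp => hM _ ⟨huY n _ hp.1, hp.2⟩)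
    (hσ.mono fun p hp => ?_)
  · exact (hℓ.measurable.comp
      (((hu n).comp measurable_fst).prodMk measurable_snd)).aestronglyMeasurable
  · exact (hℓ.tendsto _).comp ((hlim _ hp.1).prodMk_nhds tendsto_const_nhds)

end ExpectedLoss

section FeasibleSet

variable {α E : Type*} [TopologicalSpace α] [MeasurableSpace α] [NormedAddCommGroup E]
  [MeasurableSpace E] {σ : Measure (α × E)} {ℓ : E × E → ℝ} {X : Set α} {Y : Set E}

/-- The feasible set `S` of the paper, transported to bounded continuous functions on `X`;
the value `0` off `X` is irrelevant when `σ` is concentrated on `X ×ˢ Y`. -/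
def feasibleSet (σ : Measure (α × E)) (ℓ : E × E → ℝ) (X : Set α) (Y : Set E) (c : ℝ) :
    Set (X →ᵇ E) :=
  {f | (∀ x, f x ∈ Y) ∧ expectedLoss σ ℓ (Function.extend Subtype.val f 0) ≤ c}

theorem mkOfCompact_domRestrict_mem_feasibleSet [CompactSpace X] {c : ℝ} {g : α → E}
    (hg : ContinuousOn g X) (hgY : ∀ x ∈ X, g x ∈ Y) (hσ : ∀ᵐ p ∂σ, p.1 ∈ X)
    (hgc : expectedLoss σ ℓ g ≤ c) :
    mkOfCompact ⟨X.domRestrict g, hg.domRestrict⟩ ∈ feasibleSet σ ℓ X Y c :=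
  ⟨fun x => hgY x x.2,
    (expectedLoss_congr hσ fun _ hx => Function.extend_val_apply hx).trans_le hgc⟩

variable [OpensMeasurableSpace α] [BorelSpace E] [SecondCountableTopology E]

theorem isClosed_feasibleSet [IsFiniteMeasure σ] (hℓ : Continuous ℓ) (hX : MeasurableSet X)
    (hY : IsCompact Y) (hσ : ∀ᵐ p ∂σ, p ∈ X ×ˢ Y) (c : ℝ) :
    IsClosed (feasibleSet σ ℓ X Y c) := by
  refine IsSeqClosed.isClosed fun u f hu hlim => ?_
  have hpt (x : X) : Tendsto (fun n => u n x) atTop (𝓝 (f x)) :=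
    ((continuous_eval_const x).tendsto f).comp hlim
  have hfY (x : X) : f x ∈ Y :=
    hY.isClosed.mem_of_tendsto (hpt x) (.of_forall fun n => (hu n).1 x)
  refine ⟨hfY, le_of_tendsto' (tendsto_expectedLoss hℓ hY hσ (fun n => ?_) ?_ ?_) fun n => (hu n).2⟩
  · exact (MeasurableEmbedding.subtype_coe hX).measurable_extend (u n).continuous.measurable
      measurable_const
  · exact fun n x hx => Function.extend_val_apply hx ▸ (hu n).1 _
  · exact fun x hx => by simpa only [Function.extend_val_apply hx] using hpt ⟨x, hx⟩

end FeasibleSet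

theorem loss_constrained_lipschitz_min_attained_general {d m : ℕ}
    (X : Set (EuclideanSpace ℝ (Fin d))) (Y : Set (EuclideanSpace ℝ (Fin m)))
    (hX : IsCompact X) (hY : IsCompact Y)
    (σ : Measure (EuclideanSpace ℝ (Fin d) × EuclideanSpace ℝ (Fin m)))
    [IsProbabilityMeasure σ]
    (hσXY : σ (X ×ˢ Y)ᶜ = 0)
    (ℓ : EuclideanSpace ℝ (Fin m) × EuclideanSpace ℝ (Fin m) → ℝ)
    (hℓcont : Continuous ℓ)
    (c : ℝ)
    (hfeas : ∃ f₀ : EuclideanSpace ℝ (Fin d) → EuclideanSpace ℝ (Fin m),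
      (∀ x ∈ X, f₀ x ∈ Y) ∧
      (∃ K : ℝ, 0 ≤ K ∧ ∀ x₁ ∈ X, ∀ x₂ ∈ X, ‖f₀ x₁ - f₀ x₂‖ ≤ K * ‖x₁ - x₂‖) ∧
      (∫ p, ℓ (f₀ p.1, p.2) ∂σ) ≤ c) :
    ∃ (fcirc : EuclideanSpace ℝ (Fin d) → EuclideanSpace ℝ (Fin m)) (K₀ : ℝ),
      0 ≤ K₀ ∧
      (∀ x ∈ X, fcirc x ∈ Y) ∧
      (∀ x₁ ∈ X, ∀ x₂ ∈ X, ‖fcirc x₁ - fcirc x₂‖ ≤ K₀ * ‖x₁ - x₂‖) ∧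
      (∫ p, ℓ (fcirc p.1, p.2) ∂σ) ≤ c ∧
      (∀ (g : EuclideanSpace ℝ (Fin d) → EuclideanSpace ℝ (Fin m)) (K : ℝ),
        0 ≤ K →
        (∀ x ∈ X, g x ∈ Y) →
        (∀ x₁ ∈ X, ∀ x₂ ∈ X, ‖g x₁ - g x₂‖ ≤ K * ‖x₁ - x₂‖) →
        (∫ p, ℓ (g p.1, p.2) ∂σ) ≤ c →
        K₀ ≤ K) := by
  have : CompactSpace X := isCompact_iff_compactSpace.mp hX
  have hσ : ∀ᵐ p ∂σ, p ∈ X ×ˢ Y := mem_ae_iff.mpr hσXY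
  have exists_mem_feasibleSet (g : EuclideanSpace ℝ (Fin d) → EuclideanSpace ℝ (Fin m)) (K : ℝ)
      (hK : 0 ≤ K) (hgY : ∀ x ∈ X, g x ∈ Y)
      (hg : ∀ x₁ ∈ X, ∀ x₂ ∈ X, ‖g x₁ - g x₂‖ ≤ K * ‖x₁ - x₂‖) (hgc : expectedLoss σ ℓ g ≤ c) :
      ∃ f ∈ feasibleSet σ ℓ X Y c, LipschitzWith K.toNNReal f := by
    have hlip : LipschitzOnWith K.toNNReal g X :=
      lipschitzOnWith_iff_norm_sub_le.mpr (by simpa only [Real.coe_toNNReal K hK] using hg)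
    exact ⟨_, mkOfCompact_domRestrict_mem_feasibleSet hlip.continuousOn hgY
      (hσ.mono fun p hp => hp.1) hgc, lipschitzOnWith_iff_restrict.mp hlip⟩
  obtain ⟨g, hgY, ⟨K, hK, hg⟩, hgc⟩ := hfeas
  obtain ⟨f, ⟨hfY, hfc⟩, K₀, hf, hmin⟩ :=
    (isClosed_feasibleSet hℓcont hX.measurableSet hY hσ c).exists_lipschitzWith_forall_le hY
      (fun f hf => hf.1) <| let ⟨f, hfS, hf⟩ := exists_mem_feasibleSet g K hK hgY hg hgc
      ⟨f, hfS, _, hf⟩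
  have hrestrict : X.domRestrict (Function.extend Subtype.val f 0) = f :=
    Function.extend_comp Subtype.val_injective _ _
  refine ⟨Function.extend Subtype.val f 0, K₀, K₀.2, fun x hx => ?_, ?_, hfc,
    fun g K hK hgY hg hgc => ?_⟩
  · exact Function.extend_val_apply hx ▸ hfY ⟨x, hx⟩
  · exact lipschitzOnWith_iff_norm_sub_le.mp (lipschitzOnWith_iff_restrict.mpr (by rwa [hrestrict]))
  · obtain ⟨f', hf'S, hf'⟩ := exists_mem_feasibleSet g K hK hgY hg hgc
    exact (Real.le_toNNReal_iff_coe_le hK).mp (hmin f' hf'S _ hf')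

/-- (Attainment of the minimum Lipschitz constant under a loss margin;
part of Theorem 3 of the paper.) If `X` is compact, `Y` is nonempty compact convex, `σ`
is a probability measure on `X ×ˢ Y`, `ℓ` is continuous and Lipschitz in its first
argument uniformly in the second, and the feasible set
`S = {f : X → Y Lipschitz | L_σ(f) ≤ c}` is nonempty, then the infimum over `S` of the
Lipschitz constant is attained by some `f° ∈ S` with constant `K₀`. -/
theorem loss_constrained_lipschitz_min_attained {d m : ℕ}
    (X : Set (EuclideanSpace ℝ (Fin d))) (Y : Set (EuclideanSpace ℝ (Fin m)))
    (hX : IsCompact X) (hYne : Y.Nonempty) (hY : IsCompact Y) (hYconv : Convex ℝ Y)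
    (σ : Measure (EuclideanSpace ℝ (Fin d) × EuclideanSpace ℝ (Fin m)))
    [IsProbabilityMeasure σ]
    (hσXY : σ (X ×ˢ Y)ᶜ = 0)
    (ℓ : EuclideanSpace ℝ (Fin m) × EuclideanSpace ℝ (Fin m) → ℝ)
    (hℓcont : Continuous ℓ)
    (C : ℝ) (hℓlip : ∀ y z₁ z₂, |ℓ (z₁, y) - ℓ (z₂, y)| ≤ C * ‖z₁ - z₂‖)
    (c : ℝ)
    (hfeas : ∃ f₀ : EuclideanSpace ℝ (Fin d) → EuclideanSpace ℝ (Fin m),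
      (∀ x ∈ X, f₀ x ∈ Y) ∧
      (∃ K : ℝ, 0 ≤ K ∧ ∀ x₁ ∈ X, ∀ x₂ ∈ X, ‖f₀ x₁ - f₀ x₂‖ ≤ K * ‖x₁ - x₂‖) ∧
      (∫ p, ℓ (f₀ p.1, p.2) ∂σ) ≤ c) :
    ∃ (fcirc : EuclideanSpace ℝ (Fin d) → EuclideanSpace ℝ (Fin m)) (K₀ : ℝ),
      0 ≤ K₀ ∧
      (∀ x ∈ X, fcirc x ∈ Y) ∧
      (∀ x₁ ∈ X, ∀ x₂ ∈ X, ‖fcirc x₁ - fcirc x₂‖ ≤ K₀ * ‖x₁ - x₂‖) ∧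
      (∫ p, ℓ (fcirc p.1, p.2) ∂σ) ≤ c ∧
      (∀ (g : EuclideanSpace ℝ (Fin d) → EuclideanSpace ℝ (Fin m)) (K : ℝ),
        0 ≤ K →
        (∀ x ∈ X, g x ∈ Y) →
        (∀ x₁ ∈ X, ∀ x₂ ∈ X, ‖g x₁ - g x₂‖ ≤ K * ‖x₁ - x₂‖) →
        (∫ p, ℓ (g p.1, p.2) ∂σ) ≤ c →
        K₀ ≤ K) :=
  loss_constrained_lipschitz_min_attained_general X Y hX hY σ hσXY ℓ hℓcont c hfeas
end
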